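/- Let μ be any probability measure on ℂ and let μ^s = (1/2^b) Σ_{i=0}^{2^b−1} (rotation by e^{i·2πi/2^b})_*μ be its 2π/2^b-symmetrization (the average of the pushforwards of μ under multiplication by e^{i·2πi/2^b}, i = 0,…,2^b−1). Then μ^s is invariant under multiplication by e^{i·2π/2^b} and the input–output mutual information of the b-bit phase-quantized Gaussian channel satisfies I(μ^s) ≥ I(μ). -/

import Mathlib

/-!
Rotation by `2π/2^b` is an isometry of `ℂ` mapping the sector `R_y` onto `R_{y+1 mod 2^b}`, and
the noise density is rotation invariant, so `W_{y+1}(e^{2πi/2^b} u) = W_y(u)`. Rotating the input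
therefore only permutes the outputs cyclically: the conditional entropy `H(Y | U = u)` is rotation
invariant, and the output law of each rotated copy of `μ` is a cyclic shift of that of `μ`.
The symmetrization averages these copies, so its conditional entropy term equals that of `μ`,
while by concavity of `-x log x` its output entropy is at least the average of the (equal) output
entropies of the copies. The symmetrization is invariant because rotating the copies permutes
them cyclically.
-/

open MeasureTheory Real

noncomputable section

/-- Argument of a complex number taking values in `[0, 2π)`. -/
def arg2pi (z : ℂ) : ℝ := if 0 ≤ Complex.arg z then Complex.arg z else Complex.arg z + 2 * π

/-- The quantization sector `R_y` of a `b`-bit phase quantizer. -/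
def sector (b y : ℕ) : Set ℂ :=
  {z : ℂ | z ≠ 0 ∧ 2 * π * y / 2 ^ b ≤ arg2pi z ∧ arg2pi z < 2 * π * (y + 1) / 2 ^ b}

/-- Transition probability `W_y^{(b)}(α, θ)` of the `b`-bit phase-quantized Gaussian channel. -/
def W (b y : ℕ) (α θ : ℝ) : ℝ :=
  ∫ z in sector b y,
    (1 / π) *
      Real.exp (-(‖z - (Real.sqrt α : ℂ) * Complex.exp ((θ : ℂ) * Complex.I)‖ ^ 2))

/-- Transition probability with integer output index, understood modulo `2^b`. -/
def Wz (b : ℕ) (y : ℤ) (α θ : ℝ) : ℝ := W b ((y % (2 ^ b : ℤ)).toNat) α θ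

/-- `x ↦ -x log₂ x`, with the convention `0 log₂ 0 = 0`. -/
def nH (x : ℝ) : ℝ := -(x * Real.logb 2 x)

/-- Conditional output entropy `H(Y | U = √α e^{iθ})`. -/
def hEnt (b : ℕ) (α θ : ℝ) : ℝ := ∑ y ∈ Finset.range (2 ^ b), nH (W b y α θ)

/-- `W_y^{(b)}(u)` for a complex channel input `u`. -/
def Wu (b y : ℕ) (u : ℂ) : ℝ := W b y (‖u‖ ^ 2) (arg2pi u)

/-- Output probability `p_y` under input distribution `μ`. -/
def outP (b : ℕ) (μ : Measure ℂ) (y : ℕ) : ℝ := ∫ u, Wu b y u ∂μ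

/-- Mutual information of the `b`-bit phase-quantized Gaussian channel with input law `μ`. -/
def mutInfo (b : ℕ) (μ : Measure ℂ) : ℝ :=
  (∑ y ∈ Finset.range (2 ^ b), nH (outP b μ y)) -
    ∫ u, ∑ y ∈ Finset.range (2 ^ b), nH (Wu b y u) ∂μ

/-- Rotation of the complex plane by the angle `2π/2^b`. -/
def rot (b : ℕ) : ℂ → ℂ := fun u => Complex.exp (((2 * π / 2 ^ b : ℝ) : ℂ) * Complex.I) * u

/-- A measure on `ℂ` is `2π/2^b`-symmetric if it is invariant under rotation by `2π/2^b`. -/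
def RotSymm (b : ℕ) (μ : Measure ℂ) : Prop := Measure.map (rot b) μ = μ

/-- The `2π/2^b`-symmetrization of a measure `μ` on `ℂ`: the average of the pushforwards
of `μ` under rotation by `2πi/2^b`, `i = 0, …, 2^b - 1`. -/
def symmetrize (b : ℕ) (μ : Measure ℂ) : Measure ℂ :=
  (2 ^ b : ENNReal)⁻¹ • ∑ i ∈ Finset.range (2 ^ b),
    Measure.map (fun u => Complex.exp (((2 * π * i / 2 ^ b : ℝ) : ℂ) * Complex.I) * u) μ

open Finset

lemma Finset.sum_range_add_mod {M : Type*} [AddCommMonoid M] (N k : ℕ) (f : ℕ → M) :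
    ∑ y ∈ range N, f ((y + k) % N) = ∑ y ∈ range N, f y := by
  rcases N with _ | N
  · simp
  simp only [← Fin.sum_univ_eq_sum_range]
  exact Fintype.sum_equiv (Equiv.addRight (Fin.ofNat (N + 1) k)) _ _
    fun y => by simp [Fin.val_add, Nat.add_mod_mod]

lemma MeasureTheory.Measure.map_sum_map_iterate_of_iterate_eq_id {α : Type*} [MeasurableSpace α]
    {f : α → α} (hf : Measurable f) {n : ℕ} (hn : f^[n] = id) (μ : Measure α) :
    (∑ k ∈ range n, μ.map f^[k]).map f = ∑ k ∈ range n, μ.map f^[k] := by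
  rw [Measure.map_finset_sum hf.aemeasurable]
  have hstep (k : ℕ) : (μ.map f^[k]).map f = μ.map f^[k + 1] := by
    rw [Measure.map_map hf (hf.iterate k), Function.iterate_succ']
  simp_rw [hstep]
  rcases n with _ | n
  · simp
  rw [sum_range_succ, hn, sum_range_succ' _ n, Function.iterate_zero]

lemma toIcoMod_toIcoMod_add {p : ℝ} (hp : 0 < p) (a x t : ℝ) :
    toIcoMod hp a (toIcoMod hp a x + t) = toIcoMod hp a (x + t) := by
  rw [← toIcoMod_add_zsmul hp a _ (toIcoDiv hp a x), add_right_comm,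
    toIcoMod_add_toIcoDiv_zsmul]

lemma toIcoMod_add_div_mem_Ico_iff {p a : ℝ} (hp : 0 < p) {N y : ℕ} (hy : y < N)
    (ha : a ∈ Set.Ico 0 p) :
    toIcoMod hp 0 (a + p / N) ∈
        Set.Ico (p * ((y + 1) % N : ℕ) / N) (p * (((y + 1) % N : ℕ) + 1) / N) ↔
      a ∈ Set.Ico (p * y / N) (p * (y + 1) / N) := by
  have hN : (0 : ℝ) < N := by exact_mod_cast (Nat.zero_lt_of_lt hy)
  set c := p / N with hc
  have hpc : p = N * c := by rw [hc]; field_simp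
  simp only [mul_div_right_comm p, ← hc]
  obtain ⟨ha0, hap⟩ := ha
  have hc0 : 0 < c := div_pos hp hN
  have hcp : c ≤ p := div_le_self hp.le (by exact_mod_cast Nat.one_le_of_lt hy)
  -- `a + p / N` wraps around past `p` exactly when `a` lies in the last sector.
  by_cases hwrap : a + c < p
  · rw [(toIcoMod_eq_self hp).2 ⟨by positivity, by simpa using hwrap⟩]
    rcases (Nat.lt_or_eq_of_le hy : y + 1 < N ∨ y + 1 = N) with hlt | rfl
    · rw [Nat.mod_eq_of_lt hlt]
      push_cast
      constructor <;> rintro ⟨h1, h2⟩ <;> constructor <;> nlinarith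
    · rw [Nat.mod_self]
      push_cast at hpc ⊢
      constructor <;> rintro ⟨h1, h2⟩ <;> nlinarith
  · rw [← toIcoMod_sub hp, (toIcoMod_eq_self hp).2 ⟨by linarith, by linarith⟩]
    rcases (Nat.lt_or_eq_of_le hy : y + 1 < N ∨ y + 1 = N) with hlt | rfl
    · rw [Nat.mod_eq_of_lt hlt]
      have : (y : ℝ) + 2 ≤ N := by exact_mod_cast hlt
      push_cast
      constructor <;> rintro ⟨h1, h2⟩ <;> nlinarith
    · rw [Nat.mod_self]
      push_cast at hpc ⊢
      constructor <;> rintro ⟨h1, h2⟩ <;> constructor <;> nlinarith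

lemma arg2pi_eq_toIcoMod (z : ℂ) : arg2pi z = toIcoMod two_pi_pos 0 (Complex.arg z) := by
  symm
  unfold arg2pi
  split_ifs with h
  · exact (toIcoMod_eq_self _).2 ⟨h, by linarith [Complex.arg_le_pi z, pi_pos]⟩
  · rw [← toIcoMod_add_right, toIcoMod_eq_self]
    constructor <;> linarith [Complex.neg_pi_lt_arg z, Complex.arg_le_pi z]

lemma arg2pi_mem_Ico (z : ℂ) : arg2pi z ∈ Set.Ico 0 (2 * π) := by
  simpa [arg2pi_eq_toIcoMod] using toIcoMod_mem_Ico two_pi_pos 0 (Complex.arg z)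

lemma norm_mul_exp_arg2pi_mul_I (z : ℂ) :
    (‖z‖ : ℂ) * Complex.exp (arg2pi z * Complex.I) = z := by
  unfold arg2pi
  split_ifs
  · exact Complex.norm_mul_exp_arg_mul_I z
  · push_cast
    rw [add_mul, Complex.exp_add, Complex.exp_two_pi_mul_I, mul_one,
      Complex.norm_mul_exp_arg_mul_I]

lemma arg2pi_exp_mul_I_mul (t : ℝ) {z : ℂ} (hz : z ≠ 0) :
    arg2pi (Complex.exp (t * Complex.I) * z) = toIcoMod two_pi_pos 0 (arg2pi z + t) := by
  have hpolar : Complex.exp (t * Complex.I) * z =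
      (‖z‖ : ℂ) * Complex.exp ((Complex.arg z + t : ℝ) * Complex.I) := by
    conv_lhs => rw [← Complex.norm_mul_exp_arg_mul_I z]
    push_cast
    rw [add_mul, Complex.exp_add]
    ring
  rw [arg2pi_eq_toIcoMod, hpolar, Complex.exp_mul_I,
    Complex.arg_mul_cos_add_sin_mul_I_eq_toIocMod (norm_pos_iff.2 hz), toIcoMod_toIocMod,
    arg2pi_eq_toIcoMod, toIcoMod_toIcoMod_add]

lemma rot_preimage_sector (b : ℕ) {y : ℕ} (hy : y < 2 ^ b) :
    rot b ⁻¹' sector b ((y + 1) % 2 ^ b) = sector b y := by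
  ext z
  rcases eq_or_ne z 0 with rfl | hz
  · simp [sector, rot]
  have key := toIcoMod_add_div_mem_Ico_iff two_pi_pos hy (arg2pi_mem_Ico z)
  push_cast at key
  simp only [Set.mem_preimage, sector, rot, Set.mem_ofPred_eq, ne_eq, mul_eq_zero,
    Complex.exp_ne_zero, false_or, hz, not_false_eq_true, true_and,
    arg2pi_exp_mul_I_mul _ hz]
  exact key

lemma measurableSet_sector (b y : ℕ) : MeasurableSet (sector b y) := by
  have hm : Measurable arg2pi :=
    Measurable.ite (measurableSet_le measurable_const Complex.measurable_arg)
      Complex.measurable_arg (Complex.measurable_arg.add_const _)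
  exact (measurableSet_singleton 0).compl.inter
    ((measurableSet_le measurable_const hm).inter (measurableSet_lt hm measurable_const))

def gaussPDF (v : ℂ) : ℝ := (1 / π) * Real.exp (-(‖v‖ ^ 2))

lemma gaussPDF_nonneg (v : ℂ) : 0 ≤ gaussPDF v := by unfold gaussPDF; positivity

lemma continuous_gaussPDF : Continuous gaussPDF := by unfold gaussPDF; fun_prop

lemma integral_gaussPDF : ∫ v, gaussPDF v = 1 := by
  have h := GaussianFourier.integral_rexp_neg_mul_sq_norm (V := ℂ) one_pos
  norm_num [Complex.finrank_real_complex] at h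
  unfold gaussPDF
  rw [integral_const_mul, h, one_div, inv_mul_cancel₀ pi_ne_zero]

lemma integrable_gaussPDF : Integrable gaussPDF :=
  Integrable.of_integral_ne_zero (by rw [integral_gaussPDF]; exact one_ne_zero)

lemma gaussPDF_mul_of_norm_eq_one {a : ℂ} (ha : ‖a‖ = 1) (v : ℂ) :
    gaussPDF (a * v) = gaussPDF v := by
  simp only [gaussPDF, norm_mul, ha, one_mul]

lemma Wu_eq_setIntegral_gaussPDF (b y : ℕ) (u : ℂ) :
    Wu b y u = ∫ z in sector b y, gaussPDF (z - u) := by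
  rw [Wu, W, sqrt_sq (norm_nonneg u), norm_mul_exp_arg2pi_mul_I]
  rfl

lemma Wu_nonneg (b y : ℕ) (u : ℂ) : 0 ≤ Wu b y u := by
  rw [Wu_eq_setIntegral_gaussPDF]
  exact setIntegral_nonneg (measurableSet_sector b y) fun z _ => gaussPDF_nonneg _

lemma Wu_le_one (b y : ℕ) (u : ℂ) : Wu b y u ≤ 1 := by
  calc Wu b y u = ∫ z in sector b y, gaussPDF (z - u) := Wu_eq_setIntegral_gaussPDF b y u
    _ ≤ ∫ z, gaussPDF (z - u) := setIntegral_le_integral (integrable_gaussPDF.comp_sub_right u)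
        (.of_forall fun z => gaussPDF_nonneg _)
    _ = 1 := by rw [integral_sub_right_eq_self, integral_gaussPDF]

lemma measurable_Wu (b y : ℕ) : Measurable (Wu b y) := by
  have hprod : StronglyMeasurable (Function.uncurry fun u z : ℂ =>
      (sector b y).indicator (fun z => gaussPDF (z - u)) z) :=
    ((continuous_gaussPDF.comp (continuous_snd.sub continuous_fst)).measurable.indicator
      (measurable_snd (measurableSet_sector b y))).stronglyMeasurable
  have h : Wu b y = fun u => ∫ z, (sector b y).indicator (fun z => gaussPDF (z - u)) z := by
    ext u
    rw [Wu_eq_setIntegral_gaussPDF, integral_indicator (measurableSet_sector b y)]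
  rw [h]
  exact hprod.integral_prod_right.measurable

lemma rot_eq_rotation (b : ℕ) : rot b = rotation (Circle.exp (2 * π / 2 ^ b)) := by
  ext z
  simp [rot, rotation_apply, Circle.coe_exp]

lemma measurable_rot (b : ℕ) : Measurable (rot b) := measurable_id.const_mul _

lemma Wu_rot (b : ℕ) {y : ℕ} (hy : y < 2 ^ b) (u : ℂ) :
    Wu b ((y + 1) % 2 ^ b) (rot b u) = Wu b y u := by
  have hpres : MeasurePreserving (rot b) := by
    rw [rot_eq_rotation]
    exact LinearIsometryEquiv.measurePreserving _
  have hemb : MeasurableEmbedding (rot b) := by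
    rw [rot_eq_rotation]
    exact (rotation _).toHomeomorph.measurableEmbedding
  rw [Wu_eq_setIntegral_gaussPDF, Wu_eq_setIntegral_gaussPDF,
    ← hpres.setIntegral_preimage_emb hemb, rot_preimage_sector b hy]
  congr! 2 with z
  rw [rot, rot, ← mul_sub, gaussPDF_mul_of_norm_eq_one (Complex.norm_exp_ofReal_mul_I _)]

lemma Wu_rot_iterate (b : ℕ) {y : ℕ} (hy : y < 2 ^ b) (k : ℕ) (u : ℂ) :
    Wu b ((y + k) % 2 ^ b) ((rot b)^[k] u) = Wu b y u := by
  induction k with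
  | zero => rw [add_zero, Nat.mod_eq_of_lt hy, Function.iterate_zero_apply]
  | succ k ih =>
    rw [Function.iterate_succ_apply', ← add_assoc, ← Nat.mod_add_mod,
      Wu_rot b (Nat.mod_lt _ (by positivity)), ih]

lemma rot_iterate (b k : ℕ) :
    (rot b)^[k] = fun u => Complex.exp (((2 * π * k / 2 ^ b : ℝ) : ℂ) * Complex.I) * u := by
  induction k with
  | zero => ext u; simp
  | succ k ih =>
    ext u
    rw [Function.iterate_succ_apply', ih, rot, ← mul_assoc, ← Complex.exp_add]
    push_cast
    ring_nf

lemma rot_iterate_two_pow (b : ℕ) : (rot b)^[2 ^ b] = id := by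
  ext u
  rw [rot_iterate]
  push_cast
  rw [mul_div_assoc, div_self (pow_ne_zero _ two_ne_zero), mul_one, Complex.exp_two_pi_mul_I,
    one_mul, id]

lemma symmetrize_eq_sum_map_iterate (b : ℕ) (μ : Measure ℂ) :
    symmetrize b μ = (2 ^ b : ENNReal)⁻¹ • ∑ k ∈ range (2 ^ b), μ.map (rot b)^[k] := by
  simp only [symmetrize, rot_iterate]

lemma rotSymm_symmetrize (b : ℕ) (μ : Measure ℂ) : RotSymm b (symmetrize b μ) := by
  rw [RotSymm, symmetrize_eq_sum_map_iterate, Measure.map_smul,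
    Measure.map_sum_map_iterate_of_iterate_eq_id (measurable_rot b) (rot_iterate_two_pow b)]

lemma sum_comp_Wu_rot_iterate {M : Type*} [AddCommMonoid M] (b k : ℕ) (F : (ℂ → ℝ) → M) :
    ∑ y ∈ range (2 ^ b), F (fun u => Wu b y ((rot b)^[k] u)) =
      ∑ y ∈ range (2 ^ b), F (Wu b y) := by
  rw [← Finset.sum_range_add_mod _ k]
  refine sum_congr rfl fun y hy => ?_
  simp_rw [Wu_rot_iterate b (mem_range.1 hy)]

lemma integral_symmetrize (b : ℕ) (μ : Measure ℂ) [IsFiniteMeasure μ] {f : ℂ → ℝ}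
    (hf : Measurable f) {C : ℝ} (hC : ∀ u, ‖f u‖ ≤ C) :
    ∫ u, f u ∂symmetrize b μ =
      ∑ k ∈ range (2 ^ b), (2 ^ b : ℝ)⁻¹ * ∫ u, f ((rot b)^[k] u) ∂μ := by
  rw [symmetrize_eq_sum_map_iterate, integral_smul_measure,
    integral_finsetSum_measure fun k _ => .of_bound hf.aestronglyMeasurable C (.of_forall hC),
    smul_eq_mul, mul_sum]
  refine sum_congr rfl fun k _ => ?_
  rw [integral_map ((measurable_rot b).iterate k).aemeasurable hf.aestronglyMeasurable]
  simp

lemma nH_eq_smul_negMulLog : nH = (Real.log 2)⁻¹ • negMulLog := by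
  ext x
  simp only [nH, negMulLog, logb, Pi.smul_apply, smul_eq_mul]
  ring

lemma continuous_nH : Continuous nH := by
  rw [nH_eq_smul_negMulLog]
  exact continuous_negMulLog.const_smul _

lemma concaveOn_nH : ConcaveOn ℝ (Set.Ici 0) nH := by
  rw [nH_eq_smul_negMulLog]
  exact strictConcaveOn_negMulLog.concaveOn.smul (inv_nonneg.2 (Real.log_nonneg one_le_two))

lemma exists_norm_sum_nH_Wu_le (b : ℕ) :
    ∃ C, ∀ u, ‖∑ y ∈ range (2 ^ b), nH (Wu b y u)‖ ≤ C := by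
  obtain ⟨K, hK⟩ :=
    (isCompact_Icc : IsCompact (Set.Icc (0 : ℝ) 1)).exists_bound_of_continuousOn
      continuous_nH.continuousOn
  refine ⟨∑ _y ∈ range (2 ^ b), K,
    fun u => (norm_sum_le _ _).trans (sum_le_sum fun y _ => ?_)⟩
  exact hK _ ⟨Wu_nonneg b y u, Wu_le_one b y u⟩

lemma norm_Wu_le_one (b y : ℕ) (u : ℂ) : ‖Wu b y u‖ ≤ 1 := by
  rw [norm_of_nonneg (Wu_nonneg b y u)]
  exact Wu_le_one b y u

lemma outP_symmetrize (b : ℕ) (μ : Measure ℂ) [IsFiniteMeasure μ] (y : ℕ) :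
    outP b (symmetrize b μ) y =
      ∑ k ∈ range (2 ^ b), (2 ^ b : ℝ)⁻¹ * ∫ u, Wu b y ((rot b)^[k] u) ∂μ :=
  integral_symmetrize b μ (measurable_Wu b y) (norm_Wu_le_one b y)

lemma integral_sum_nH_Wu_symmetrize (b : ℕ) (μ : Measure ℂ) [IsFiniteMeasure μ] :
    ∫ u, ∑ y ∈ range (2 ^ b), nH (Wu b y u) ∂symmetrize b μ =
      ∫ u, ∑ y ∈ range (2 ^ b), nH (Wu b y u) ∂μ := by
  obtain ⟨C, hC⟩ := exists_norm_sum_nH_Wu_le b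
  have hmeas : Measurable fun u => ∑ y ∈ range (2 ^ b), nH (Wu b y u) :=
    Finset.measurable_sum _ fun y _ => continuous_nH.measurable.comp (measurable_Wu b y)
  have hinv (k : ℕ) (u : ℂ) : ∑ y ∈ range (2 ^ b), nH (Wu b y ((rot b)^[k] u)) =
      ∑ y ∈ range (2 ^ b), nH (Wu b y u) :=
    sum_comp_Wu_rot_iterate b k fun f => nH (f u)
  simp_rw [integral_symmetrize b μ hmeas hC, hinv, ← sum_mul]
  simp

lemma sum_nH_outP_le_symmetrize (b : ℕ) (μ : Measure ℂ) [IsFiniteMeasure μ] :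
    ∑ y ∈ range (2 ^ b), nH (outP b μ y) ≤
      ∑ y ∈ range (2 ^ b), nH (outP b (symmetrize b μ) y) := by
  have hw : ∑ _k ∈ range (2 ^ b), (2 ^ b : ℝ)⁻¹ = 1 := by simp
  calc ∑ y ∈ range (2 ^ b), nH (outP b μ y)
      = ∑ k ∈ range (2 ^ b),
          (2 ^ b : ℝ)⁻¹ *
            ∑ y ∈ range (2 ^ b), nH (∫ u, Wu b y ((rot b)^[k] u) ∂μ) := by
        simp_rw [sum_comp_Wu_rot_iterate b _ fun f => nH (∫ u, f u ∂μ), ← sum_mul, hw,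
          one_mul]
        rfl
    _ = ∑ y ∈ range (2 ^ b), ∑ k ∈ range (2 ^ b),
          (2 ^ b : ℝ)⁻¹ * nH (∫ u, Wu b y ((rot b)^[k] u) ∂μ) := by
        simp_rw [mul_sum]
        exact sum_comm
    _ ≤ ∑ y ∈ range (2 ^ b), nH (outP b (symmetrize b μ) y) := by
        refine sum_le_sum fun y _ => ?_
        rw [outP_symmetrize]
        exact concaveOn_nH.le_map_sum (fun _ _ => by positivity) hw
          fun k _ => Set.mem_Ici.2 (integral_nonneg fun u => Wu_nonneg b y _)

lemma mutInfo_le_mutInfo_symmetrize (b : ℕ) (μ : Measure ℂ) [IsFiniteMeasure μ] :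
    mutInfo b μ ≤ mutInfo b (symmetrize b μ) := by
  rw [mutInfo, mutInfo, integral_sum_nH_Wu_symmetrize]
  linarith [sum_nH_outP_le_symmetrize b μ]

theorem stmt_3_general (b : ℕ) (μ : Measure ℂ) [IsProbabilityMeasure μ] :
    RotSymm b (symmetrize b μ) ∧ mutInfo b μ ≤ mutInfo b (symmetrize b μ) :=
  ⟨rotSymm_symmetrize b μ, mutInfo_le_mutInfo_symmetrize b μ⟩

/-- the symmetrization is `2π/2^b`-symmetric and does not decrease
the mutual information. -/
theorem stmt_3 (b : ℕ) (hb : 1 ≤ b) (μ : Measure ℂ) [IsProbabilityMeasure μ] :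
    RotSymm b (symmetrize b μ) ∧ mutInfo b μ ≤ mutInfo b (symmetrize b μ) :=
  stmt_3_general b μ

end
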